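/- Define g : [0,1] → ℝ by g(x) = Σ_{i=1}^∞ x_i · 4^(Σ_{j=1}^{i−1} x_j) · 5^(−i) for a binary expansion x = Σ x_i/2^i. Then the series converges absolutely, g(0)=0, g(1)=1, and g satisfies g(x) = (1/5)·g(2x) for 0 ≤ x < 1/2 and g(x) = (4/5)·g(2x−1) + 1/5 for 1/2 ≤ x ≤ 1, so g equals Salem's singular function L_{1/5}. -/

import Mathlib

/-!
Peeling off the first binary digit `d` of `x` shifts the digits of `2x - d` into place, so the
series satisfies `g x = d/5 + (4^d/5) g (2x - d)`: this is the de Rham system of Salem's `L_{1/5}`.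
Uniqueness holds because the difference of two bounded solutions satisfies
`|h x| ≤ (4/5) |h y|` for some `y ∈ [0,1]`, so its supremum `s` obeys `s ≤ (4/5) s`.
-/

/-- The `i`-th binary digit of `x` (indices from 1), using the terminating
(floor) expansion at dyadic rationals. -/
noncomputable def binDigit (x : ℝ) (i : ℕ) : ℕ := ⌊x * 2 ^ i⌋.toNat % 2

/-- The function `f_{T0}(x) = Σ_{i≥1} x_i · 4^(Σ_{j<i} x_j) · 5^{-i}` obtained
from the 2D linear elementary CA `T₀` (with `g(1) = 1`, corresponding to the
all-ones expansion of `1`). -/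
noncomputable def fT0 (x : ℝ) : ℝ :=
  if x = 1 then 1 else
    ∑' i : ℕ, (binDigit x (i + 1) : ℝ) *
      4 ^ (∑ j ∈ Finset.Icc 1 i, binDigit x j) * (1 / 5 : ℝ) ^ (i + 1)

open Set

theorem Set.eqOn_zero_of_abs_le_mul_abs {α : Type*} {S : Set α} {h : α → ℝ} {r : ℝ}
    (hr₀ : 0 ≤ r) (hr₁ : r < 1) (hbdd : BddAbove ((|h ·|) '' S))
    (hcontr : ∀ x ∈ S, ∃ y ∈ S, |h x| ≤ r * |h y|) : S.EqOn h 0 := by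
  intro x hx
  set s := sSup ((|h ·|) '' S)
  have hle : ∀ z ∈ S, |h z| ≤ s := fun z hz => le_csSup hbdd (mem_image_of_mem _ hz)
  have hs : s ≤ r * s := by
    refine csSup_le ⟨_, mem_image_of_mem _ hx⟩ ?_
    rintro _ ⟨z, hz, rfl⟩
    obtain ⟨y, hy, hzy⟩ := hcontr z hz
    exact hzy.trans (mul_le_mul_of_nonneg_left (hle y hy) hr₀)
  have : |h x| ≤ 0 := by nlinarith [hle x hx, abs_nonneg (h x)]
  exact abs_nonpos_iff.mp this

theorem eqOn_Icc_of_deRham {f g : ℝ → ℝ} {a b c : ℝ} (ha : |a| < 1) (hb : |b| < 1)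
    (hf : BddAbove ((|f ·|) '' Icc 0 1)) (hg : BddAbove ((|g ·|) '' Icc 0 1))
    (hf₁ : ∀ x ∈ Ico (0 : ℝ) (1 / 2), f x = a * f (2 * x))
    (hf₂ : ∀ x ∈ Icc (1 / 2 : ℝ) 1, f x = b * f (2 * x - 1) + c)
    (hg₁ : ∀ x ∈ Ico (0 : ℝ) (1 / 2), g x = a * g (2 * x))
    (hg₂ : ∀ x ∈ Icc (1 / 2 : ℝ) 1, g x = b * g (2 * x - 1) + c) :
    EqOn f g (Icc 0 1) := by
  have hbdd : BddAbove ((|(f - g) ·|) '' Icc 0 1) := by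
    obtain ⟨M, hM⟩ := hf
    obtain ⟨N, hN⟩ := hg
    refine ⟨M + N, ?_⟩
    rintro _ ⟨x, hx, rfl⟩
    have := abs_sub (f x) (g x)
    dsimp only [Pi.sub_apply]
    linarith [hM (mem_image_of_mem _ hx), hN (mem_image_of_mem _ hx)]
  have hcontr : ∀ x ∈ Icc (0 : ℝ) 1, ∃ y ∈ Icc (0 : ℝ) 1,
      |(f - g) x| ≤ max |a| |b| * |(f - g) y| := by
    rintro x ⟨hx₀, hx₁⟩
    rcases lt_or_ge x (1 / 2) with hx | hx
    · refine ⟨2 * x, ⟨by linarith, by linarith⟩, ?_⟩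
      rw [Pi.sub_apply, Pi.sub_apply, hf₁ x ⟨hx₀, hx⟩, hg₁ x ⟨hx₀, hx⟩, ← mul_sub, abs_mul]
      gcongr
      exact le_max_left _ _
    · refine ⟨2 * x - 1, ⟨by linarith, by linarith⟩, ?_⟩
      rw [Pi.sub_apply, Pi.sub_apply, hf₂ x ⟨hx, hx₁⟩, hg₂ x ⟨hx, hx₁⟩, add_sub_add_right_eq_sub,
        ← mul_sub, abs_mul]
      gcongr
      exact le_max_right _ _
  intro x hx
  exact sub_eq_zero.mp <|
    eqOn_zero_of_abs_le_mul_abs (le_max_of_le_left (abs_nonneg a)) (max_lt ha hb) hbdd hcontr hx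

theorem Finset.sum_Icc_one_succ {M : Type*} [AddCommMonoid M] (f : ℕ → M) (k : ℕ) :
    ∑ j ∈ Finset.Icc 1 (k + 1), f j = f 1 + ∑ j ∈ Finset.Icc 1 k, f (j + 1) := by
  induction k with
  | zero => simp
  | succ k ih => rw [sum_Icc_succ_top (by omega), ih, sum_Icc_succ_top (by omega), add_assoc]

namespace binDigit

theorem le_one (x : ℝ) (i : ℕ) : binDigit x i ≤ 1 :=
  Nat.le_of_lt_succ (Nat.mod_lt _ two_pos)

theorem two_mul (x : ℝ) (i : ℕ) : binDigit (2 * x) i = binDigit x (i + 1) := by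
  rw [binDigit, binDigit, pow_succ, mul_comm (2 : ℝ) x, mul_assoc, mul_comm (2 : ℝ)]

theorem sub_natCast {y : ℝ} {n : ℕ} (hn : (n : ℝ) ≤ y) {i : ℕ} (hi : 1 ≤ i) :
    binDigit (y - n) i = binDigit y i := by
  have hshift : (y - n) * 2 ^ i = y * 2 ^ i - ((n * 2 ^ i : ℕ) : ℤ) := by push_cast; ring
  have hle : ((n * 2 ^ i : ℕ) : ℤ) ≤ ⌊y * 2 ^ i⌋ := by
    rw [Int.le_floor]
    push_cast
    gcongr
  have heven : 2 ∣ n * 2 ^ i := Dvd.dvd.mul_left (dvd_pow_self 2 (by omega)) n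
  rw [binDigit, binDigit, hshift, Int.floor_sub_intCast]
  omega

theorem one_of_lt_half {x : ℝ} (hx : x ∈ Ico (0 : ℝ) (1 / 2)) : binDigit x 1 = 0 := by
  have : ⌊x * 2 ^ 1⌋ = 0 := Int.floor_eq_zero_iff.mpr ⟨by linarith [hx.1], by linarith [hx.2]⟩
  rw [binDigit, this]
  rfl

theorem one_of_half_le {x : ℝ} (hx : x ∈ Ico (1 / 2 : ℝ) 1) : binDigit x 1 = 1 := by
  have : ⌊x * 2 ^ 1⌋ = 1 :=
    Int.floor_eq_iff.mpr ⟨by push_cast; linarith [hx.1], by push_cast; linarith [hx.2]⟩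
  rw [binDigit, this]
  rfl

end binDigit

noncomputable def fT0Term (x : ℝ) (i : ℕ) : ℝ :=
  (binDigit x (i + 1) : ℝ) * 4 ^ (∑ j ∈ Finset.Icc 1 i, binDigit x j) * (1 / 5 : ℝ) ^ (i + 1)

theorem fT0_of_ne_one {x : ℝ} (hx : x ≠ 1) : fT0 x = ∑' i, fT0Term x i := if_neg hx

theorem fT0Term_nonneg (x : ℝ) (i : ℕ) : 0 ≤ fT0Term x i := by
  unfold fT0Term; positivity

theorem fT0Term_le (x : ℝ) (i : ℕ) : fT0Term x i ≤ 1 / 5 * (4 / 5) ^ i := by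
  have hdigit : (binDigit x (i + 1) : ℝ) ≤ 1 := by exact_mod_cast binDigit.le_one x (i + 1)
  have hcount : ∑ j ∈ Finset.Icc 1 i, binDigit x j ≤ i := by
    simpa using Finset.sum_le_sum fun j (_ : j ∈ Finset.Icc 1 i) => binDigit.le_one x j
  calc fT0Term x i ≤ 1 * 4 ^ i * (1 / 5 : ℝ) ^ (i + 1) := by
        unfold fT0Term
        gcongr
        norm_num
    _ = 1 / 5 * (4 / 5) ^ i := by rw [pow_succ, div_pow 4, one_div_pow]; ring

theorem summable_fT0Term (x : ℝ) : Summable (fT0Term x) :=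
  .of_nonneg_of_le (fT0Term_nonneg x) (fT0Term_le x)
    ((summable_geometric_of_lt_one (by norm_num) (by norm_num)).mul_left _)

theorem abs_fT0_le_one (x : ℝ) : |fT0 x| ≤ 1 := by
  by_cases hx : x = 1
  · simp [fT0, hx]
  rw [fT0_of_ne_one hx, abs_of_nonneg (tsum_nonneg (fT0Term_nonneg x))]
  calc ∑' i, fT0Term x i ≤ ∑' i : ℕ, 1 / 5 * (4 / 5 : ℝ) ^ i :=
        (summable_fT0Term x).tsum_le_tsum (fT0Term_le x)
          ((summable_geometric_of_lt_one (by norm_num) (by norm_num)).mul_left _)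
    _ = 1 := by rw [tsum_mul_left, tsum_geometric_of_lt_one (by norm_num) (by norm_num)]; norm_num

theorem tsum_fT0Term_eq {x y : ℝ} (hy : ∀ j, 1 ≤ j → binDigit y j = binDigit x (j + 1)) :
    ∑' i, fT0Term x i = binDigit x 1 / 5 + 4 ^ binDigit x 1 / 5 * ∑' i, fT0Term y i := by
  have hterm : ∀ k, fT0Term x (k + 1) = 4 ^ binDigit x 1 / 5 * fT0Term y k := by
    intro k
    have hsum : ∑ j ∈ Finset.Icc 1 k, binDigit x (j + 1) = ∑ j ∈ Finset.Icc 1 k, binDigit y j :=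
      Finset.sum_congr rfl fun j hj => (hy j (Finset.mem_Icc.mp hj).1).symm
    rw [fT0Term, fT0Term, Finset.sum_Icc_one_succ, hsum, ← hy (k + 1) (by omega), pow_add,
      pow_succ (1 / 5 : ℝ) (k + 1)]
    ring
  rw [(summable_fT0Term x).tsum_eq_zero_add, tsum_congr hterm, tsum_mul_left, fT0Term]
  simp only [zero_add, Finset.Icc_eq_empty_of_lt one_pos, Finset.sum_empty, pow_zero, pow_one]
  ring

theorem fT0_of_lt_half {x : ℝ} (hx : x ∈ Ico (0 : ℝ) (1 / 2)) : fT0 x = 1 / 5 * fT0 (2 * x) := by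
  rw [fT0_of_ne_one (by linarith [hx.2]), fT0_of_ne_one (by linarith [hx.2]),
    tsum_fT0Term_eq fun j _ => binDigit.two_mul x j, binDigit.one_of_lt_half hx]
  simp

theorem fT0_of_half_le {x : ℝ} (hx : x ∈ Icc (1 / 2 : ℝ) 1) :
    fT0 x = 4 / 5 * fT0 (2 * x - 1) + 1 / 5 := by
  rcases hx.2.eq_or_lt with rfl | hx₁
  · norm_num [fT0]
  have hdigits : ∀ j, 1 ≤ j → binDigit (2 * x - 1) j = binDigit x (j + 1) := fun j hj => by
    rw [← Nat.cast_one (R := ℝ), binDigit.sub_natCast (by push_cast; linarith [hx.1]) hj,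
      binDigit.two_mul]
  rw [fT0_of_ne_one hx₁.ne, fT0_of_ne_one (by linarith), tsum_fT0Term_eq hdigits,
    binDigit.one_of_half_le ⟨hx.1, hx₁⟩]
  push_cast
  ring

/-- `f_{T0}` is given by an absolutely convergent series, takes the values 0
and 1 at the endpoints, and satisfies the de Rham functional equation with
parameter `1/5`; hence it equals Salem's singular function `L_{1/5}`. -/
theorem fT0_eq_salem :
    (∀ x ∈ Set.Icc (0:ℝ) 1, Summable fun i : ℕ =>
      |(binDigit x (i + 1) : ℝ) *
        4 ^ (∑ j ∈ Finset.Icc 1 i, binDigit x j) * (1 / 5 : ℝ) ^ (i + 1)|) ∧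
    fT0 0 = 0 ∧ fT0 1 = 1 ∧
    (∀ x ∈ Set.Ico (0:ℝ) (1/2), fT0 x = (1/5) * fT0 (2 * x)) ∧
    (∀ x ∈ Set.Icc (1/2:ℝ) 1, fT0 x = (4/5) * fT0 (2 * x - 1) + 1/5) ∧
    (∀ L : ℝ → ℝ, ContinuousOn L (Set.Icc 0 1) →
      (∀ x ∈ Set.Ico (0:ℝ) (1/2), L x = (1/5) * L (2 * x)) →
      (∀ x ∈ Set.Icc (1/2:ℝ) 1, L x = (4/5) * L (2 * x - 1) + 1/5) →
      ∀ x ∈ Set.Icc (0:ℝ) 1, fT0 x = L x) := by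
  have hzero : fT0 0 = 0 := by
    have := fT0_of_lt_half (x := 0) (by norm_num)
    rw [mul_zero] at this
    linarith
  refine ⟨fun x _ => (summable_fT0Term x).abs, hzero, if_pos rfl,
    fun x hx => fT0_of_lt_half hx, fun x hx => fT0_of_half_le hx, ?_⟩
  intro L hL hL₁ hL₂
  have hbdd : BddAbove ((|fT0 ·|) '' Icc 0 1) :=
    ⟨1, by rintro _ ⟨x, -, rfl⟩; exact abs_fT0_le_one x⟩
  exact eqOn_Icc_of_deRham (by norm_num) (by norm_num) hbdd
    (isCompact_Icc.bddAbove_image hL.abs) (fun x hx => fT0_of_lt_half hx)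
    (fun x hx => fT0_of_half_le hx) hL₁ hL₂
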